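/- arXiv:2206.08889 — 2 statements merged into one kernel-verified Lean document; each statement's English description precedes it below -/
import Mathlib

section
/- (Tweedie's formula) Let X have density p on R^M, U ~ N(0, I) independent of X, η > 0, and Y = X + ηU with marginal density p̃. Then E[X | Y = y] = y + η² ∇ log p̃(y) for almost every y. -/
/-!
Differentiating under the integral sign, with `∇G(v) = -η⁻² G(v) v` for the Gaussian kernel `G`,
gives `∇p̃(y) = -η⁻² ∫ p(x) G(y - x) (y - x) dx = -η⁻² (p̃(y) y - ∫ p(x) G(y - x) x dx)`, and
dividing by `p̃(y) > 0` yields the formula. All integrands are dominated by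
multiples of `p` thanks to `‖v‖ G(v) ≤ η G(0)`.
-/

open MeasureTheory

/-- The isotropic Gaussian kernel with standard deviation `η` on `ℝ^M`. -/
noncomputable def gaussKer (M : ℕ) (η : ℝ) (v : EuclideanSpace ℝ (Fin M)) : ℝ :=
  (2 * Real.pi * η ^ 2) ^ (-(M : ℝ) / 2) * Real.exp (-‖v‖ ^ 2 / (2 * η ^ 2))

section Gradient

open InnerProductSpace

variable {E : Type*} [NormedAddCommGroup E] [InnerProductSpace ℝ E] [CompleteSpace E]

theorem HasGradientAt.log {f : E → ℝ} {f' x : E} (hf : HasGradientAt f f' x) (hx : f x ≠ 0) :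
    HasGradientAt (fun y => Real.log (f y)) ((f x)⁻¹ • f') x := by
  rw [hasGradientAt_iff_hasFDerivAt, map_smul] at *
  exact hf.log hx

theorem hasGradientAt_integral_of_dominated_of_gradient_le {α : Type*} [MeasurableSpace α]
    {μ : Measure α} {F : E → α → ℝ} {F' : E → α → E} {x₀ : E} {s : Set E} {bound : α → ℝ}
    (hs : s ∈ nhds x₀) (hF_meas : ∀ᶠ x in nhds x₀, AEStronglyMeasurable (F x) μ)
    (hF_int : Integrable (F x₀) μ) (hF'_int : Integrable (F' x₀) μ)
    (h_bound : ∀ᵐ a ∂μ, ∀ x ∈ s, ‖F' x a‖ ≤ bound a) (bound_integrable : Integrable bound μ)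
    (h_diff : ∀ᵐ a ∂μ, ∀ x ∈ s, HasGradientAt (F · a) (F' x a) x) :
    HasGradientAt (fun x => ∫ a, F x a ∂μ) (∫ a, F' x₀ a ∂μ) x₀ := by
  have hdual := hasFDerivAt_integral_of_dominated_of_fderiv_le
    (F' := fun x a => toDual ℝ E (F' x a)) hs hF_meas hF_int
    ((toDual ℝ E).continuous.comp_aestronglyMeasurable hF'_int.1) (by simpa using h_bound)
    bound_integrable (by simpa only [hasGradientAt_iff_hasFDerivAt] using h_diff)
  have hcomm : ∫ a, toDual ℝ E (F' x₀ a) ∂μ = toDual ℝ E (∫ a, F' x₀ a ∂μ) :=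
    ContinuousLinearMap.integral_comp_commSL (by simp)
      (toDual ℝ E).toContinuousLinearEquiv.toContinuousLinearMap hF'_int
  rwa [hasGradientAt_iff_hasFDerivAt, ← hcomm]

end Gradient

theorem integral_mul_pos_of_pos {α : Type*} [MeasurableSpace α] {μ : Measure α} {f g : α → ℝ}
    (hf : 0 ≤ f) (hf_pos : 0 < ∫ a, f a ∂μ) (hg : ∀ a, 0 < g a)
    (hfg : Integrable (fun a => f a * g a) μ) : 0 < ∫ a, f a * g a ∂μ := by
  have hsupp : Function.support (fun a => f a * g a) = Function.support f := by
    ext a; simp [(hg a).ne']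
  rw [integral_pos_iff_support_of_nonneg (fun a => mul_nonneg (hf a) (hg a).le) hfg, hsupp]
  exact (integral_pos_iff_support_of_nonneg hf (.of_integral_ne_zero hf_pos.ne')).mp hf_pos

section GaussKer

variable {M : ℕ} {η : ℝ}

theorem gaussKer_pos (hη : 0 < η) (v : EuclideanSpace ℝ (Fin M)) : 0 < gaussKer M η v := by
  unfold gaussKer; positivity

theorem gaussKer_nonneg (v : EuclideanSpace ℝ (Fin M)) : 0 ≤ gaussKer M η v := by
  unfold gaussKer; positivity

theorem gaussKer_le_gaussKer_zero (v : EuclideanSpace ℝ (Fin M)) :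
    gaussKer M η v ≤ gaussKer M η 0 := by
  unfold gaussKer
  gcongr
  simp only [norm_zero]
  ring_nf
  positivity

theorem continuous_gaussKer : Continuous (gaussKer M η) := by
  unfold gaussKer; fun_prop

theorem norm_mul_gaussKer_le (hη : 0 < η) (v : EuclideanSpace ℝ (Fin M)) :
    ‖v‖ * gaussKer M η v ≤ η * gaussKer M η 0 := by
  have hexp : ‖v‖ ≤ η * Real.exp (‖v‖ ^ 2 / (2 * η ^ 2)) := by
    calc ‖v‖ ≤ η * (‖v‖ ^ 2 / (2 * η ^ 2) + 1) := by
          rw [mul_add, mul_one, ← sub_nonneg]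
          have : η * (‖v‖ ^ 2 / (2 * η ^ 2)) + η - ‖v‖ = ((‖v‖ - η) ^ 2 + η ^ 2) / (2 * η) := by
            field_simp; ring
          rw [this]; positivity
      _ ≤ η * Real.exp (‖v‖ ^ 2 / (2 * η ^ 2)) := by gcongr; exact Real.add_one_le_exp _
  have key : ‖v‖ * Real.exp (-‖v‖ ^ 2 / (2 * η ^ 2)) ≤ η :=
    calc ‖v‖ * Real.exp (-‖v‖ ^ 2 / (2 * η ^ 2))
        ≤ η * Real.exp (‖v‖ ^ 2 / (2 * η ^ 2)) * Real.exp (-‖v‖ ^ 2 / (2 * η ^ 2)) := by gcongr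
      _ = η := by rw [mul_assoc, ← Real.exp_add, neg_div, add_neg_cancel, Real.exp_zero, mul_one]
  calc ‖v‖ * gaussKer M η v
      = (2 * Real.pi * η ^ 2) ^ (-(M : ℝ) / 2) * (‖v‖ * Real.exp (-‖v‖ ^ 2 / (2 * η ^ 2))) := by
        unfold gaussKer; ring
    _ ≤ (2 * Real.pi * η ^ 2) ^ (-(M : ℝ) / 2) * η := by gcongr
    _ = η * gaussKer M η 0 := by simp [gaussKer, mul_comm]

theorem hasGradientAt_gaussKer (v : EuclideanSpace ℝ (Fin M)) :
    HasGradientAt (gaussKer M η) ((-(η ^ 2)⁻¹ * gaussKer M η v) • v) v := by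
  rw [hasGradientAt_iff_hasFDerivAt]
  have h := ((((hasFDerivAt_id v).norm_sq).mul_const (-(2 * η ^ 2)⁻¹)).exp).const_mul
    ((2 * Real.pi * η ^ 2) ^ (-(M : ℝ) / 2))
  refine (h.congr_fderiv ?_).congr_of_eventuallyEq (.of_forall fun w => ?_)
  · ext w
    simp only [gaussKer, ContinuousLinearMap.comp_id, map_smul, nsmul_eq_mul, Nat.cast_ofNat,
      smul_apply, innerSL_apply_apply, InnerProductSpace.toDual_apply_apply, smul_eq_mul, id_eq,
      div_eq_mul_inv, mul_neg, neg_mul]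
    ring
  · simp [gaussKer, div_eq_mul_inv]

end GaussKer

section Smoothing

variable {M : ℕ} {η : ℝ} {μ : Measure (EuclideanSpace ℝ (Fin M))}
  {p : EuclideanSpace ℝ (Fin M) → ℝ}

theorem MeasureTheory.Integrable.mul_gaussKer_sub (hp : Integrable p μ)
    (y : EuclideanSpace ℝ (Fin M)) : Integrable (fun x => p x * gaussKer M η (y - x)) μ :=
  hp.mul_bdd (continuous_gaussKer.comp (continuous_const.sub continuous_id)).aestronglyMeasurable
    (.of_forall fun x => by
      rw [Real.norm_of_nonneg (gaussKer_nonneg _)]; exact gaussKer_le_gaussKer_zero _)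

theorem MeasureTheory.Integrable.mul_gaussKer_sub_smul (hη : 0 < η) (hp : Integrable p μ)
    (y : EuclideanSpace ℝ (Fin M)) :
    Integrable (fun x => (p x * gaussKer M η (y - x)) • (y - x)) μ := by
  simp_rw [mul_smul]
  refine hp.smul_bdd (η * gaussKer M η 0) ?_ (.of_forall fun x => ?_)
  · exact ((continuous_gaussKer.comp (continuous_const.sub continuous_id)).smul
      (continuous_const.sub continuous_id)).aestronglyMeasurable
  · rw [norm_smul, Real.norm_of_nonneg (gaussKer_nonneg _), mul_comm]
    exact norm_mul_gaussKer_le hη _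

theorem hasGradientAt_integral_mul_gaussKer_sub (hη : 0 < η) (hp : Integrable p μ)
    (y : EuclideanSpace ℝ (Fin M)) :
    HasGradientAt (fun w => ∫ x, p x * gaussKer M η (w - x) ∂μ)
      (-(η ^ 2)⁻¹ • ∫ x, (p x * gaussKer M η (y - x)) • (y - x) ∂μ) y := by
  rw [← integral_smul]
  refine hasGradientAt_integral_of_dominated_of_gradient_le (s := Set.univ)
    (F := fun w x => p x * gaussKer M η (w - x))
    (F' := fun w x => -(η ^ 2)⁻¹ • (p x * gaussKer M η (w - x)) • (w - x))
    (bound := fun x => (η ^ 2)⁻¹ * (η * gaussKer M η 0) * ‖p x‖) Filter.univ_mem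
    (.of_forall fun w => (hp.mul_gaussKer_sub w).1) (hp.mul_gaussKer_sub y)
    ((hp.mul_gaussKer_sub_smul hη y).smul (-(η ^ 2)⁻¹)) (.of_forall fun x w _ => ?_)
    (hp.norm.const_mul _) (.of_forall fun x w _ => ?_)
  · rw [norm_smul, norm_smul, norm_mul, Real.norm_of_nonneg (gaussKer_nonneg _), norm_neg,
      norm_inv, norm_pow, Real.norm_of_nonneg hη.le]
    calc (η ^ 2)⁻¹ * (‖p x‖ * gaussKer M η (w - x) * ‖w - x‖)
        = (η ^ 2)⁻¹ * (‖w - x‖ * gaussKer M η (w - x)) * ‖p x‖ := by ring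
      _ ≤ (η ^ 2)⁻¹ * (η * gaussKer M η 0) * ‖p x‖ := by
          gcongr _ * ?_ * _
          exact norm_mul_gaussKer_le hη _
  · have h := ((hasGradientAt_gaussKer (η := η) (w - x)).hasFDerivAt.comp w
      ((hasFDerivAt_id w).sub_const x)).const_mul (p x)
    rw [hasGradientAt_iff_hasFDerivAt]
    refine h.congr_fderiv ?_
    rw [ContinuousLinearMap.comp_id, ← map_smul, smul_smul, smul_smul]
    congr 2
    ring

end Smoothing

theorem tweedie_formula_general {M : ℕ} (η : ℝ) (hη : 0 < η)
    (p : EuclideanSpace ℝ (Fin M) → ℝ)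
    (hp0 : ∀ x, 0 ≤ p x) (hp1 : ∫ x, p x = 1) :
    ∀ᵐ y : EuclideanSpace ℝ (Fin M),
      (∫ x, p x * gaussKer M η (y - x))⁻¹ • (∫ x, (p x * gaussKer M η (y - x)) • x)
        = y + η ^ 2 •
            gradient (fun w => Real.log (∫ x, p x * gaussKer M η (w - x))) y := by
  refine .of_forall fun y => ?_
  have hp : Integrable p := .of_integral_ne_zero (by simp [hp1])
  have hq : 0 < ∫ x, p x * gaussKer M η (y - x) :=
    integral_mul_pos_of_pos hp0 (by simp [hp1]) (fun x => gaussKer_pos hη _)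
      (hp.mul_gaussKer_sub y)
  have hmoment : ∫ x, (p x * gaussKer M η (y - x)) • x
      = (∫ x, p x * gaussKer M η (y - x)) • y
        - ∫ x, (p x * gaussKer M η (y - x)) • (y - x) := by
    rw [← integral_smul_const, ← integral_sub ((hp.mul_gaussKer_sub y).smul_const y)
      (hp.mul_gaussKer_sub_smul hη y)]
    simp only [← smul_sub, sub_sub_cancel]
  rw [((hasGradientAt_integral_mul_gaussKer_sub hη hp y).log hq.ne').gradient, hmoment]
  match_scalars <;> field_simp

/-- Tweedie's formula: if `X` has density `p` on `ℝ^M` with finite mean, `U ~ N(0, I)` is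
independent of `X`, `η > 0`, and `Y = X + ηU` has marginal density
`p̃ y = ∫ p x · N(y; x, η²I) dx`, then for almost every `y`,
`E[X | Y = y] = y + η² ∇ log p̃ (y)`, where the conditional expectation is expressed through
the conditional density of `X` given `Y = y`. -/
theorem tweedie_formula {M : ℕ} (η : ℝ) (hη : 0 < η)
    (p : EuclideanSpace ℝ (Fin M) → ℝ) (hpm : Measurable p)
    (hp0 : ∀ x, 0 ≤ p x) (hp1 : ∫ x, p x = 1)
    (hmean : Integrable fun x : EuclideanSpace ℝ (Fin M) => ‖x‖ * p x) :
    ∀ᵐ y : EuclideanSpace ℝ (Fin M),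
      (∫ x, p x * gaussKer M η (y - x))⁻¹ • (∫ x, (p x * gaussKer M η (y - x)) • x)
        = y + η ^ 2 •
            gradient (fun w => Real.log (∫ x, p x * gaussKer M η (w - x))) y :=
  tweedie_formula_general η hη p hp0 hp1
end

section
/- Let λ₁,…,λ_M > 0, D < 2Σλ_i, and consider maximizing Σ_i ln(λ_i² − c_i²) over c_i ∈ [0, λ_i) subject to Σ_i c_i ≥ Σ_i λ_i − D/2. The maximum is attained at c_i = √(λ_i² + θ²) − θ for a parameter θ > 0 chosen so that the constraint is active. -/
open Finset

/-- Maximizing `∑ i, ln (λ i ² - c i ²)` over `c i ∈ [0, λ i)` subject to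
`∑ i, c i ≥ ∑ i, λ i - D/2` (with `0 < D < 2 ∑ λ i`): the maximum is attained at
`c i = √(λ i ² + θ²) - θ` for a parameter `θ > 0` making the constraint active. -/
theorem entropy_maximization_attained {M : ℕ} (lam : Fin M → ℝ) (D θ : ℝ)
    (hlam : ∀ i, 0 < lam i) (hD0 : 0 < D) (hD : D < 2 * ∑ i, lam i) (hθ : 0 < θ)
    (hactive : ∑ i, (Real.sqrt ((lam i) ^ 2 + θ ^ 2) - θ) = ∑ i, lam i - D / 2) :
    (∀ i, Real.sqrt ((lam i) ^ 2 + θ ^ 2) - θ ∈ Set.Ico 0 (lam i)) ∧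
      ∀ c : Fin M → ℝ, (∀ i, c i ∈ Set.Ico 0 (lam i)) →
        (∑ i, lam i - D / 2 ≤ ∑ i, c i) →
        ∑ i, Real.log ((lam i) ^ 2 - (c i) ^ 2)
          ≤ ∑ i, Real.log ((lam i) ^ 2 - (Real.sqrt ((lam i) ^ 2 + θ ^ 2) - θ) ^ 2) := by
  set f : Fin M → ℝ := fun i => Real.sqrt ((lam i) ^ 2 + θ ^ 2) - θ with hf
  have hs : ∀ i, Real.sqrt ((lam i) ^ 2 + θ ^ 2) ^ 2 = (lam i) ^ 2 + θ ^ 2 := fun i =>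
    Real.sq_sqrt (by positivity)
  have hsnn : ∀ i, 0 ≤ Real.sqrt ((lam i) ^ 2 + θ ^ 2) := fun i => Real.sqrt_nonneg _
  have hfpos : ∀ i, 0 < f i := by
    intro i
    have h1 : θ < Real.sqrt ((lam i) ^ 2 + θ ^ 2) := by
      nlinarith [hs i, hsnn i, hlam i]
    simp only [hf]; linarith
  have hflt : ∀ i, f i < lam i := by
    intro i
    have h1 : Real.sqrt ((lam i) ^ 2 + θ ^ 2) < lam i + θ := by
      nlinarith [hs i, hsnn i, hlam i]
    simp only [hf]; linarith
  have hkey : ∀ i, (lam i) ^ 2 - (f i) ^ 2 = 2 * θ * f i := by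
    intro i
    simp only [hf]
    linear_combination -(hs i)
  refine ⟨fun i => ⟨(hfpos i).le, hflt i⟩, ?_⟩
  intro c hc hsum
  have hpt : ∀ i, Real.log ((lam i) ^ 2 - (c i) ^ 2)
      ≤ Real.log ((lam i) ^ 2 - (f i) ^ 2) + (f i - c i) / θ := by
    intro i
    obtain ⟨hc0, hc1⟩ := hc i
    have hx : 0 < (lam i) ^ 2 - (c i) ^ 2 := by nlinarith [hlam i]
    have hy : 0 < (lam i) ^ 2 - (f i) ^ 2 := by nlinarith [hfpos i, hflt i]
    have hlog : Real.log (((lam i) ^ 2 - (c i) ^ 2) / ((lam i) ^ 2 - (f i) ^ 2))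
        ≤ ((lam i) ^ 2 - (c i) ^ 2) / ((lam i) ^ 2 - (f i) ^ 2) - 1 :=
      Real.log_le_sub_one_of_pos (by positivity)
    rw [Real.log_div hx.ne' hy.ne'] at hlog
    have hq : ((lam i) ^ 2 - (c i) ^ 2) / ((lam i) ^ 2 - (f i) ^ 2) - 1
        ≤ (f i - c i) / θ := by
      rw [div_sub_one hy.ne', div_le_div_iff₀ hy hθ]
      have := hkey i
      nlinarith [sq_nonneg (f i - c i), hfpos i]
    linarith
  calc ∑ i, Real.log ((lam i) ^ 2 - (c i) ^ 2)
      ≤ ∑ i, (Real.log ((lam i) ^ 2 - (f i) ^ 2) + (f i - c i) / θ) :=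
        Finset.sum_le_sum fun i _ => hpt i
    _ = ∑ i, Real.log ((lam i) ^ 2 - (f i) ^ 2) + (∑ i, f i - ∑ i, c i) / θ := by
        rw [Finset.sum_add_distrib, ← Finset.sum_div, Finset.sum_sub_distrib]
    _ ≤ ∑ i, Real.log ((lam i) ^ 2 - (f i) ^ 2) := by
        have : ∑ i, f i ≤ ∑ i, c i := by rw [hf]; rw [hf] at hactive; linarith [hactive, hsum]
        have h2 : (∑ i, f i - ∑ i, c i) / θ ≤ 0 := div_nonpos_of_nonpos_of_nonneg (by linarith) hθ.le
        linarith
end
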